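/- arXiv:2310.11224 — 2 statements merged into one kernel-verified Lean document; each statement's English description precedes it below -/
import Mathlib

section
/- For every integer N ≥ 1 there exist a smooth, compactly supported, radially symmetric function η : ℝ^N → ℝ and a constant k > 0 such that η ≥ 0, η is not identically zero, the support of η is contained in the closed annulus {x : 1 ≤ |x| ≤ 2}, and −Δη(x) ≤ k·η(x) for every x ∈ ℝ^N. -/
/-!
Take `η x = g ‖x‖²` with `g s = exp (-1 / q s)` where `q s = (s - 1) (4 - s) > 0`, and `g s = 0`
elsewhere. For a function of `s = ‖x‖²` the Laplacian is `4 s g'' + 2 N g'`, and on `1 < s < 4`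
this equals `g / q⁴` times a polynomial in `s`. Since `q'² = 9 - 4 q`, that polynomial tends to
`-36 s` at the boundary of the annulus, so it is bounded by `C q - 36 ≤ (C q)⁴`, i.e.
`-Δη ≤ C⁴ η`.
-/

open MeasureTheory Filter Set

noncomputable section

/-- Sum-of-second-partial-derivatives Laplacian of a function on `ℝ^N`. -/
def lap {N : ℕ} (f : EuclideanSpace ℝ (Fin N) → ℝ) (x : EuclideanSpace ℝ (Fin N)) : ℝ :=
  ∑ i : Fin N, fderiv ℝ (fun y => fderiv ℝ f y (EuclideanSpace.single i 1)) x
    (EuclideanSpace.single i 1)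

section RadialLaplacian

variable {N : ℕ} {g g' g'' : ℝ → ℝ}

theorem fderiv_comp_norm_sq_single (hg : ∀ s, HasDerivAt g (g' s) s)
    (y : EuclideanSpace ℝ (Fin N)) (i : Fin N) :
    fderiv ℝ (fun y : EuclideanSpace ℝ (Fin N) => g (‖y‖ ^ 2)) y (EuclideanSpace.single i 1) =
      g' (‖y‖ ^ 2) * (2 * y i) := by
  have hd : HasFDerivAt (fun y : EuclideanSpace ℝ (Fin N) => g (‖y‖ ^ 2))
      (g' (‖y‖ ^ 2) • (2 • innerSL ℝ y)) y :=
    (hg _).comp_hasFDerivAt y (hasStrictFDerivAt_norm_sq y).hasFDerivAt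
  rw [hd.fderiv]
  simp [EuclideanSpace.inner_single_right]

theorem lap_comp_norm_sq (hg : ∀ s, HasDerivAt g (g' s) s) (hg' : ∀ s, HasDerivAt g' (g'' s) s)
    (x : EuclideanSpace ℝ (Fin N)) :
    lap (fun y => g (‖y‖ ^ 2)) x = 4 * ‖x‖ ^ 2 * g'' (‖x‖ ^ 2) + 2 * N * g' (‖x‖ ^ 2) := by
  have second_partial (i : Fin N) :
      fderiv ℝ (fun y => g' (‖y‖ ^ 2) * (2 * y i)) x (EuclideanSpace.single i 1) =
        4 * g'' (‖x‖ ^ 2) * x i ^ 2 + 2 * g' (‖x‖ ^ 2) := by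
    have hd : HasFDerivAt (fun y : EuclideanSpace ℝ (Fin N) => g' (‖y‖ ^ 2) * (2 * y i))
        (g' (‖x‖ ^ 2) • (2 : ℝ) • EuclideanSpace.proj i +
          (2 * x i) • g'' (‖x‖ ^ 2) • 2 • innerSL ℝ x) x :=
      ((hg' _).comp_hasFDerivAt x (hasStrictFDerivAt_norm_sq x).hasFDerivAt).mul
        ((EuclideanSpace.proj i : EuclideanSpace ℝ (Fin N) →L[ℝ] ℝ).hasFDerivAt.const_mul 2)
    rw [hd.fderiv]
    simp only [add_apply, smul_apply, PiLp.proj_apply,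
      PiLp.single_eq_same, coe_innerSL_apply, EuclideanSpace.inner_single_right, smul_eq_mul,
      nsmul_eq_mul, RCLike.conj_to_real]
    ring
  simp_rw [lap, fderiv_comp_norm_sq_single hg, second_partial]
  rw [Finset.sum_add_distrib, ← Finset.mul_sum, ← EuclideanSpace.real_norm_sq_eq]
  simp only [Finset.sum_const, Finset.card_univ, Fintype.card_fin, nsmul_eq_mul]
  ring

end RadialLaplacian

namespace expNegInvGlue

open Polynomial

theorem hasDerivAt (x : ℝ) : HasDerivAt expNegInvGlue (x⁻¹ ^ 2 * expNegInvGlue x) x := by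
  simpa using hasDerivAt_polynomial_eval_inv_mul 1 x

theorem hasDerivAt_inv_sq_mul (x : ℝ) :
    HasDerivAt (fun x => x⁻¹ ^ 2 * expNegInvGlue x)
      ((x⁻¹ ^ 4 - 2 * x⁻¹ ^ 3) * expNegInvGlue x) x := by
  convert hasDerivAt_polynomial_eval_inv_mul (X ^ 2) x using 1
  · simp
  · simp only [derivative_X_pow, eval_mul, eval_pow, eval_X, eval_sub, eval_C]
    ring

end expNegInvGlue

namespace AnnulusCutoff

def quad (s : ℝ) : ℝ := (s - 1) * (4 - s)

theorem quad_pos_iff {s : ℝ} : 0 < quad s ↔ 1 < s ∧ s < 4 := by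
  unfold quad
  constructor
  · intro h
    constructor <;> nlinarith
  · rintro ⟨h1, h4⟩
    nlinarith

theorem hasDerivAt_quad (s : ℝ) : HasDerivAt quad (5 - 2 * s) s := by
  have := ((hasDerivAt_id s).sub_const 1).mul ((hasDerivAt_id s).const_sub 4)
  exact this.congr_deriv (by simp only [id]; ring)

def profile (s : ℝ) : ℝ := expNegInvGlue (quad s)

def profileDeriv (s : ℝ) : ℝ := (quad s)⁻¹ ^ 2 * expNegInvGlue (quad s) * (5 - 2 * s)

def profileDeriv2 (s : ℝ) : ℝ :=
  ((quad s)⁻¹ ^ 4 - 2 * (quad s)⁻¹ ^ 3) * expNegInvGlue (quad s) * (5 - 2 * s) ^ 2 -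
    2 * ((quad s)⁻¹ ^ 2 * expNegInvGlue (quad s))

theorem hasDerivAt_profile (s : ℝ) : HasDerivAt profile (profileDeriv s) s :=
  (expNegInvGlue.hasDerivAt _).comp s (hasDerivAt_quad s)

theorem hasDerivAt_profileDeriv (s : ℝ) : HasDerivAt profileDeriv (profileDeriv2 s) s := by
  have h := ((expNegInvGlue.hasDerivAt_inv_sq_mul _).comp s (hasDerivAt_quad s)).mul
    (((hasDerivAt_id s).const_mul 2).const_sub 5)
  exact h.congr_deriv (by simp only [profileDeriv2, Function.comp_apply, id]; ring)

theorem contDiff_profile : ContDiff ℝ (⊤ : ℕ∞) profile :=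
  expNegInvGlue.contDiff.comp (by unfold quad; fun_prop)

theorem neg_lap_numerator_le {N s u w : ℝ} (hN : 0 ≤ N) (hs1 : 1 ≤ s) (hs4 : s ≤ 4) (hu : u = quad s)
    (hw : w = 5 - 2 * s) :
    -4 * s * w ^ 2 + 8 * s * w ^ 2 * u + 8 * s * u ^ 2 - 2 * N * w * u ^ 2 ≤
      (14 * N + 376) * u - 36 := by
  have hw2 : w ^ 2 = 9 - 4 * u := by rw [hu, hw, quad]; ring
  have hu0 : 0 ≤ u := by rw [hu, quad]; nlinarith
  have hu9 : u ≤ 9 / 4 := by nlinarith [sq_nonneg w]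
  have h1 : -4 * s * w ^ 2 ≤ -36 + 16 * u := by nlinarith [sq_nonneg w]
  have h2 : 8 * s * w ^ 2 * u ≤ 288 * u := by nlinarith [mul_nonneg hu0 (sq_nonneg w)]
  have h3 : 8 * s * u ^ 2 ≤ 72 * u := by nlinarith [mul_nonneg hu0 hu0]
  have h4 : -2 * N * w * u ^ 2 ≤ 14 * N * u := by
    nlinarith [mul_nonneg hN (mul_nonneg hu0 hu0), mul_nonneg hN hu0]
  linarith

theorem sub_le_pow_four (t : ℝ) : t - 36 ≤ t ^ 4 := by
  nlinarith [sq_nonneg (t ^ 2 - 1), sq_nonneg (t - 1 / 4)]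

theorem neg_radial_lap_profile_le {N : ℝ} (hN : 0 ≤ N) (s : ℝ) :
    -(4 * s * profileDeriv2 s + 2 * N * profileDeriv s) ≤ (14 * N + 376) ^ 4 * profile s := by
  rcases le_or_gt (quad s) 0 with hq | hq
  · simp [profile, profileDeriv, profileDeriv2, expNegInvGlue.zero_of_nonpos hq]
  obtain ⟨hs1, hs4⟩ := quad_pos_iff.1 hq
  simp only [profile, profileDeriv, profileDeriv2]
  set u := quad s
  set E := expNegInvGlue u
  have hE : 0 < E := expNegInvGlue.pos_of_pos hq
  have hP := neg_lap_numerator_le (u := u) (w := 5 - 2 * s) hN hs1.le hs4.le rfl rfl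
  calc _ = E * u⁻¹ ^ 4 * (-4 * s * (5 - 2 * s) ^ 2 + 8 * s * (5 - 2 * s) ^ 2 * u +
          8 * s * u ^ 2 - 2 * N * (5 - 2 * s) * u ^ 2) := by
        field_simp
        ring
    _ ≤ E * u⁻¹ ^ 4 * ((14 * N + 376) * u) ^ 4 := by
        gcongr
        exact hP.trans (sub_le_pow_four _)
    _ = (14 * N + 376) ^ 4 * E := by
        field_simp

variable {N : ℕ}

def cutoff (x : EuclideanSpace ℝ (Fin N)) : ℝ := profile (‖x‖ ^ 2)

theorem contDiff_cutoff : ContDiff ℝ (⊤ : ℕ∞) (cutoff (N := N)) :=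
  contDiff_profile.comp (contDiff_norm_sq ℝ)

theorem support_cutoff_subset :
    Function.support (cutoff (N := N)) ⊆ {x | 1 ≤ ‖x‖ ∧ ‖x‖ ≤ 2} := by
  intro x hx
  have hq : 0 < quad (‖x‖ ^ 2) := by
    by_contra! h
    exact hx (expNegInvGlue.zero_of_nonpos h)
  obtain ⟨h1, h4⟩ := quad_pos_iff.1 hq
  constructor <;> nlinarith [norm_nonneg x]

theorem tsupport_cutoff_subset : tsupport (cutoff (N := N)) ⊆ {x | 1 ≤ ‖x‖ ∧ ‖x‖ ≤ 2} :=
  closure_minimal support_cutoff_subset <|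
    (isClosed_le continuous_const continuous_norm).inter
      (isClosed_le continuous_norm continuous_const)

theorem hasCompactSupport_cutoff : HasCompactSupport (cutoff (N := N)) :=
  (isCompact_closedBall 0 2).of_isClosed_subset (isClosed_tsupport _) fun _ hx =>
    mem_closedBall_zero_iff.2 (tsupport_cutoff_subset hx).2

theorem cutoff_ne_zero (hN : 1 ≤ N) : cutoff (N := N) ≠ 0 := by
  intro h
  have hx := congrFun h (EuclideanSpace.single ⟨0, hN⟩ (3 / 2))
  rw [cutoff, profile, PiLp.norm_single, Pi.zero_apply, expNegInvGlue.zero_iff_nonpos, quad] at hx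
  norm_num at hx

theorem neg_lap_cutoff_le (x : EuclideanSpace ℝ (Fin N)) :
    -lap cutoff x ≤ (14 * N + 376) ^ 4 * cutoff x := by
  rw [show lap cutoff x = _ from lap_comp_norm_sq hasDerivAt_profile hasDerivAt_profileDeriv x]
  exact neg_radial_lap_profile_le (Nat.cast_nonneg N) _

end AnnulusCutoff

/-- Existence of a smooth, nonnegative, radially symmetric cut-off `η` supported in the annulus
`{1 ≤ |x| ≤ 2}`, not identically zero, satisfying `-Δη ≤ k·η` for some `k > 0`. -/
theorem exists_radial_annulus_cutoff (N : ℕ) (hN : 1 ≤ N) :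
    ∃ η : EuclideanSpace ℝ (Fin N) → ℝ, ∃ k : ℝ, 0 < k ∧
      ContDiff ℝ (⊤ : ℕ∞) η ∧
      HasCompactSupport η ∧
      (∀ x y : EuclideanSpace ℝ (Fin N), ‖x‖ = ‖y‖ → η x = η y) ∧
      (∀ x, 0 ≤ η x) ∧
      η ≠ 0 ∧
      tsupport η ⊆ {x : EuclideanSpace ℝ (Fin N) | 1 ≤ ‖x‖ ∧ ‖x‖ ≤ 2} ∧
      (∀ x, -lap η x ≤ k * η x) :=
  ⟨AnnulusCutoff.cutoff, (14 * N + 376) ^ 4, by positivity, AnnulusCutoff.contDiff_cutoff,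
    AnnulusCutoff.hasCompactSupport_cutoff,
    fun x y hxy => by rw [AnnulusCutoff.cutoff, AnnulusCutoff.cutoff, hxy],
    fun _ => expNegInvGlue.nonneg _, AnnulusCutoff.cutoff_ne_zero hN,
    AnnulusCutoff.tsupport_cutoff_subset, AnnulusCutoff.neg_lap_cutoff_le⟩

end
end

section
/- Let N ≥ 1, m > 1, 1 < p < m, σ > 0, and let L = σ(m−1)+2(p−1), α = (σ+2)/L. Let f be a solution of the self-similar profile equation (f^m)''(ξ) + ((N−1)/ξ)(f^m)'(ξ) − α f(ξ) + β ξ f'(ξ) + ξ^σ f(ξ)^p = 0 on (0,δ) with f^m twice continuously differentiable on [0,δ), f(0) = a > 0 and f'(0) = 0. Then (f^m)''(0) = αa/N > 0; in particular f is strictly increasing on some interval (0,ε) with ε > 0. -/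
/-!
Write `g = f ^ m`. The chain rule and `f'(0) = 0` give `g'(0) = 0`, so `g'(ξ) / ξ → g''(0)` as
`ξ → 0⁺`, and the radial term `(N - 1) g'(ξ) / ξ` tends to `(N - 1) g''(0)`. Since `f = g ^ (1/m)`
near a point where `f > 0`, `f' = g' / (m f ^ (m - 1))` tends to `0`, so `β ξ f'` and `ξ ^ σ f ^ p`
vanish in the limit and the equation gives `N g''(0) = α a`. As `g''(0) > 0`, `g' > 0` and hence
`f' > 0` on a right neighbourhood of `0`.
-/

open Filter Set Topology

lemma derivWithin_Ici_eq_derivWithin_Ico {h : ℝ → ℝ} {a b x : ℝ} (hx : x ∈ Ico a b) :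
    derivWithin h (Ici a) x = derivWithin h (Ico a b) x := by
  refine derivWithin_congr_set ?_
  rw [← Ici_inter_Iio]
  exact (inter_eventuallyEq_left.2 (eventually_of_mem (Iio_mem_nhds hx.2) fun _ hy _ => hy)).symm

lemma ContDiffOn.derivWithin_Ici {h : ℝ → ℝ} {k n : WithTop ℕ∞} {a b : ℝ}
    (hh : ContDiffOn ℝ k h (Ico a b)) (hnk : n + 1 ≤ k) :
    ContDiffOn ℝ n (derivWithin h (Ici a)) (Ico a b) :=
  (hh.derivWithin (uniqueDiffOn_Ico a b) hnk).congr fun _ hx =>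
    derivWithin_Ici_eq_derivWithin_Ico hx

lemma ContDiffOn.hasDerivWithinAt_Ici {h : ℝ → ℝ} {n : WithTop ℕ∞} {a b : ℝ} (hab : a < b)
    (hh : ContDiffOn ℝ n h (Ico a b)) (hn : n ≠ 0) :
    HasDerivWithinAt h (derivWithin h (Ici a) a) (Ici a) a :=
  ((hh.differentiableOn hn a ⟨le_rfl, hab⟩).mono_of_mem_nhdsWithin
    (Ico_mem_nhdsGE hab)).hasDerivWithinAt

lemma tendsto_div_of_hasDerivWithinAt_Ici {G : ℝ → ℝ} {c : ℝ} (hG0 : G 0 = 0)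
    (hG : HasDerivWithinAt G c (Ici 0) 0) :
    Tendsto (fun ξ => G ξ / ξ) (𝓝[>] 0) (𝓝 c) := by
  refine ((hasDerivWithinAt_iff_tendsto_slope' self_notMem_Ioi).1
    (hG.mono Ioi_subset_Ici_self)).congr fun ξ => ?_
  simp [slope_def_field, hG0]

lemma mul_eq_of_tendsto_radial {G G' : ℝ → ℝ} {c A k : ℝ} (hG0 : G 0 = 0)
    (hG : HasDerivWithinAt G c (Ici 0) 0) (hG' : Tendsto G' (𝓝[>] 0) (𝓝 c))
    (h : Tendsto (fun ξ => G' ξ + k / ξ * G ξ) (𝓝[>] 0) (𝓝 A)) : (1 + k) * c = A := by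
  have hlim : Tendsto (fun ξ => G' ξ + k / ξ * G ξ) (𝓝[>] 0) (𝓝 (c + k * c)) := by
    refine (hG'.add ((tendsto_div_of_hasDerivWithinAt_Ici hG0 hG).const_mul k)).congr fun ξ => ?_
    ring
  linear_combination tendsto_nhds_unique hlim h

lemma HasDerivAt.of_rpow {f : ℝ → ℝ} {m d x : ℝ} (hm : m ≠ 0) (hf : ∀ᶠ s in 𝓝 x, 0 ≤ f s)
    (hfx : 0 < f x) (hd : HasDerivAt (fun s => f s ^ m) d x) :
    HasDerivAt f (d / (m * f x ^ (m - 1))) x := by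
  have hroot : (fun s => (f s ^ m) ^ m⁻¹) =ᶠ[𝓝 x] f := by
    filter_upwards [hf] with s hs
    rw [← Real.rpow_mul hs, mul_inv_cancel₀ hm, Real.rpow_one]
  refine ((hd.rpow_const (p := m⁻¹) (Or.inl (Real.rpow_pos_of_pos hfx m).ne'))
    |>.congr_of_eventuallyEq hroot.symm).congr_deriv ?_
  rw [← Real.rpow_mul hfx.le, mul_sub, mul_inv_cancel₀ hm, mul_one, ← neg_sub, Real.rpow_neg hfx.le]
  field_simp

lemma exists_strictMonoOn_Ioo_of_eventually_hasDerivAt_pos {f f' : ℝ → ℝ} {x : ℝ}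
    (h : ∀ᶠ ξ in 𝓝[>] x, HasDerivAt f (f' ξ) ξ ∧ 0 < f' ξ) :
    ∃ ε > x, StrictMonoOn f (Ioo x ε) := by
  obtain ⟨ε, hε, hsub⟩ := mem_nhdsGT_iff_exists_Ioo_subset.1 h
  refine ⟨ε, hε, strictMonoOn_of_deriv_pos (convex_Ioo x ε)
    (fun ξ hξ => (hsub hξ).1.continuousAt.continuousWithinAt) fun ξ hξ => ?_⟩
  rw [interior_Ioo] at hξ
  rw [(hsub hξ).1.deriv]
  exact (hsub hξ).2

lemma eventually_hasDerivAt_of_differentiableOn_rpow {f : ℝ → ℝ} {m a x δ : ℝ} (hm : m ≠ 0)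
    (ha : 0 < a) (hf : Tendsto f (𝓝[>] x) (𝓝 a)) (hfnn : ∀ ξ ∈ Ioo x δ, 0 ≤ f ξ)
    (hdiff : DifferentiableOn ℝ (fun s => f s ^ m) (Ioo x δ)) (hxδ : x < δ) :
    ∀ᶠ ξ in 𝓝[>] x, 0 < f ξ ∧
      HasDerivAt f (derivWithin (fun s => f s ^ m) (Ici x) ξ / (m * f ξ ^ (m - 1))) ξ := by
  filter_upwards [Ioo_mem_nhdsGT hxδ, hf.eventually (lt_mem_nhds ha)] with ξ hξ hfξ
  have hIoo : Ioo x δ ∈ 𝓝 ξ := isOpen_Ioo.mem_nhds hξ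
  refine ⟨hfξ, HasDerivAt.of_rpow hm (eventually_of_mem hIoo hfnn) hfξ ?_⟩
  rw [derivWithin_of_mem_nhds (Ici_mem_nhds hξ.1)]
  exact ((hdiff ξ hξ).differentiableAt hIoo).hasDerivAt

lemma tendsto_deriv_of_eventually_hasDerivAt_div {f G : ℝ → ℝ} {m a x : ℝ} (hm : m ≠ 0)
    (ha : 0 < a) (hf : Tendsto f (𝓝[>] x) (𝓝 a)) (hG : Tendsto G (𝓝[>] x) (𝓝 0))
    (hd : ∀ᶠ ξ in 𝓝[>] x, HasDerivAt f (G ξ / (m * f ξ ^ (m - 1))) ξ) :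
    Tendsto (deriv f) (𝓝[>] x) (𝓝 0) := by
  have hlim := hG.div (tendsto_const_nhds (x := m) |>.mul (hf.rpow_const (p := m - 1)
    (Or.inl ha.ne'))) (mul_ne_zero hm (Real.rpow_pos_of_pos ha _).ne')
  rw [zero_div] at hlim
  exact hlim.congr' (hd.mono fun ξ hξ => hξ.deriv.symm)

lemma tendsto_profile_lower_order_terms {f : ℝ → ℝ} {a α β σ p : ℝ} (hσ : 0 < σ) (ha : 0 < a)
    (hf : Tendsto f (𝓝[>] 0) (𝓝 a)) (hf' : Tendsto (deriv f) (𝓝[>] 0) (𝓝 0)) :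
    Tendsto (fun ξ => α * f ξ - β * ξ * deriv f ξ - ξ ^ σ * f ξ ^ p) (𝓝[>] 0) (𝓝 (α * a)) := by
  have hid : Tendsto (fun ξ : ℝ => ξ) (𝓝[>] 0) (𝓝 0) := nhdsWithin_le_nhds
  have hpow : Tendsto (fun ξ : ℝ => ξ ^ σ) (𝓝[>] 0) (𝓝 0) := by
    simpa [Real.zero_rpow hσ.ne'] using hid.rpow_const (p := σ) (Or.inr hσ.le)
  simpa using ((hf.const_mul α).sub ((hid.const_mul β).mul hf')).sub
    (hpow.mul (hf.rpow_const (p := p) (Or.inl ha.ne')))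

theorem second_derivative_at_zero_general
    (N : ℕ) (hN : 1 ≤ N) (m p σ : ℝ) (hm : 1 < m) (hp : 1 < p) (hσ : 0 < σ)
    (L α β : ℝ) (hL : L = σ * (m - 1) + 2 * (p - 1)) (hα : α = (σ + 2) / L)
    (a δ : ℝ) (ha : 0 < a) (hδ : 0 < δ)
    (f : ℝ → ℝ)
    (hf0 : f 0 = a)
    (hfnn : ∀ ξ ∈ Set.Ico (0 : ℝ) δ, 0 ≤ f ξ)
    (hfd0 : HasDerivWithinAt f 0 (Set.Ici 0) 0)
    (hreg : ContDiffOn ℝ 2 (fun s => f s ^ m) (Set.Ico 0 δ))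
    (hODE : ∀ ξ ∈ Set.Ioo (0 : ℝ) δ,
      derivWithin (derivWithin (fun s => f s ^ m) (Set.Ici 0)) (Set.Ici 0) ξ
        + (((N : ℝ) - 1) / ξ) * derivWithin (fun s => f s ^ m) (Set.Ici 0) ξ
        - α * f ξ + β * ξ * deriv f ξ + ξ ^ σ * f ξ ^ p = 0) :
    derivWithin (derivWithin (fun s => f s ^ m) (Set.Ici 0)) (Set.Ici 0) 0 = α * a / N ∧
    0 < α * a / N ∧
    ∃ ε > (0 : ℝ), StrictMonoOn f (Set.Ioo 0 ε) := by
  set g' := derivWithin (fun s => f s ^ m) (Ici 0)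
  set c := derivWithin g' (Ici 0) 0
  have hm0 : m ≠ 0 := by positivity
  have hN' : (0 : ℝ) < N := by exact_mod_cast hN
  have hαa : 0 < α * a / N := by
    have : 0 < L := by rw [hL]; nlinarith
    rw [hα]; positivity
  have hg'C1 : ContDiffOn ℝ 1 g' (Ico 0 δ) := hreg.derivWithin_Ici (by norm_num)
  have hg'0 : g' 0 = 0 := by
    simpa using (hfd0.rpow_const (p := m) (Or.inl (hf0 ▸ ha.ne'))).derivWithin
      (uniqueDiffWithinAt_Ici 0)
  have hg' : HasDerivWithinAt g' c (Ici 0) 0 := hg'C1.hasDerivWithinAt_Ici hδ one_ne_zero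
  have hg''lim : Tendsto (derivWithin g' (Ici 0)) (𝓝[>] 0) (𝓝 c) :=
    ((hg'C1.derivWithin_Ici (n := 0) le_rfl).continuousOn 0 ⟨le_rfl, hδ⟩).mono_of_mem_nhdsWithin
      (Ico_mem_nhdsGT hδ)
  have hf : Tendsto f (𝓝[>] 0) (𝓝 a) :=
    hf0 ▸ (hfd0.continuousWithinAt.mono Ioi_subset_Ici_self).tendsto
  have hderiv := eventually_hasDerivAt_of_differentiableOn_rpow hm0 ha hf
    (fun ξ hξ => hfnn ξ (Ioo_subset_Ico_self hξ))
    ((hreg.differentiableOn two_ne_zero).mono Ioo_subset_Ico_self) hδ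
  have hf' := tendsto_deriv_of_eventually_hasDerivAt_div hm0 ha hf
    (by simpa [hg'0] using (hg'.continuousWithinAt.mono Ioi_subset_Ici_self).tendsto)
    (hderiv.mono fun _ h => h.2)
  have hradial : Tendsto (fun ξ => derivWithin g' (Ici 0) ξ + (N - 1) / ξ * g' ξ) (𝓝[>] 0)
      (𝓝 (α * a)) :=
    (tendsto_profile_lower_order_terms (β := β) (p := p) hσ ha hf hf').congr' <|
      eventually_of_mem (Ioo_mem_nhdsGT hδ) fun ξ hξ => by dsimp only; linarith [hODE ξ hξ]
  have hc : c = α * a / N := by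
    have := mul_eq_of_tendsto_radial hg'0 hg' hg''lim hradial
    field_simp
    linarith
  refine ⟨hc, hαa, exists_strictMonoOn_Ioo_of_eventually_hasDerivAt_pos
    (f' := fun ξ => g' ξ / (m * f ξ ^ (m - 1))) ?_⟩
  filter_upwards [hderiv, self_mem_nhdsWithin,
    (tendsto_div_of_hasDerivWithinAt_Ici hg'0 hg').eventually (lt_mem_nhds (hc ▸ hαa))]
    with ξ ⟨hfξ, hξ⟩ (hξ0 : 0 < ξ) hg'ξ
  exact ⟨hξ, div_pos (by simpa [hξ0] using hg'ξ) (by positivity)⟩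

/-- Computation at the origin: for a solution of the self-similar profile equation on `[0,δ)`
with `f(0) = a > 0`, `f'(0) = 0` and `f^m` twice continuously differentiable up to `0`, one has
`(f^m)''(0) = α a / N > 0`; in particular `f` is strictly increasing on some interval `(0,ε)`. -/
theorem second_derivative_at_zero
    (N : ℕ) (hN : 1 ≤ N) (m p σ : ℝ) (hm : 1 < m) (hp : 1 < p) (hpm : p < m) (hσ : 0 < σ)
    (L α β : ℝ) (hL : L = σ * (m - 1) + 2 * (p - 1)) (hα : α = (σ + 2) / L)
    (hβ : β = (m - p) / L)
    (a δ : ℝ) (ha : 0 < a) (hδ : 0 < δ)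
    (f : ℝ → ℝ)
    (hf0 : f 0 = a)
    (hfc : ContinuousOn f (Set.Ico 0 δ))
    (hfnn : ∀ ξ ∈ Set.Ico (0 : ℝ) δ, 0 ≤ f ξ)
    (hfd0 : HasDerivWithinAt f 0 (Set.Ici 0) 0)
    (hreg : ContDiffOn ℝ 2 (fun s => f s ^ m) (Set.Ico 0 δ))
    (hODE : ∀ ξ ∈ Set.Ioo (0 : ℝ) δ,
      derivWithin (derivWithin (fun s => f s ^ m) (Set.Ici 0)) (Set.Ici 0) ξ
        + (((N : ℝ) - 1) / ξ) * derivWithin (fun s => f s ^ m) (Set.Ici 0) ξ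
        - α * f ξ + β * ξ * deriv f ξ + ξ ^ σ * f ξ ^ p = 0) :
    derivWithin (derivWithin (fun s => f s ^ m) (Set.Ici 0)) (Set.Ici 0) 0 = α * a / N ∧
    0 < α * a / N ∧
    ∃ ε > (0 : ℝ), StrictMonoOn f (Set.Ioo 0 ε) :=
  second_derivative_at_zero_general N hN m p σ hm hp hσ L α β hL hα a δ ha hδ f hf0 hfnn hfd0 hreg
    hODE
end
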